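/- Define the Jacobian matrix of the p = 2 one-loop flow, J(m, l) = [[−3 + (4/π)m − 16l, −16m], [0, −4 + 16l]]. Then the characteristic polynomial of J(11π/2, 1/2) is (X − 11)(X − 4); the characteristic polynomial of J(3π/2, 0) is (X − 3)(X + 4); and the characteristic polynomial of J(0, 1/2) is (X + 11)(X − 4). In particular the critical exponents (negatives of the eigenvalues of the stability matrix) are (−11, −4) at FP1, (4, −3) at FP2, and (11, −4) at FP3. -/
import Mathlib

open Real Polynomial

/-- Jacobian (stability matrix) of the `p = 2` one-loop flow at the point `(m, l)`. -/
noncomputable def Jp2 (m l : ℝ) : Matrix (Fin 2) (Fin 2) ℝ :=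
  !![-3 + (4 / π) * m - 16 * l, -16 * m; 0, -4 + 16 * l]

/-- Characteristic polynomials of the stability matrix at the three non-Gaussian
fixed points of the `p = 2` model: the eigenvalues are (11, 4) at FP1,
(3, −4) at FP2 and (−11, 4) at FP3, so that the critical exponents (their
opposites) are (−11, −4), (4, −3) and (11, −4) respectively. -/
theorem p2_critical_exponents :
    (Jp2 (11 * π / 2) (1 / 2)).charpoly = (X - C 11) * (X - C 4) ∧
    (Jp2 (3 * π / 2) 0).charpoly = (X - C 3) * (X + C 4) ∧
    (Jp2 0 (1 / 2)).charpoly = (X + C 11) * (X - C 4) := by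
  have hπ : (π : ℝ) ≠ 0 := Real.pi_ne_zero
  have h1 : Jp2 (11 * π / 2) (1 / 2) = !![(11 : ℝ), -(88 * π); 0, 4] := by
    ext i j; fin_cases i <;> fin_cases j <;> simp [Jp2] <;> field_simp <;> ring
  have h2 : Jp2 (3 * π / 2) 0 = !![(3 : ℝ), -(24 * π); 0, -4] := by
    ext i j; fin_cases i <;> fin_cases j <;> simp [Jp2] <;> field_simp <;> ring
  have h3 : Jp2 0 (1 / 2) = !![(-11 : ℝ), 0; 0, 4] := by
    rw [Jp2]; congr 1 <;> norm_num
  refine ⟨?_, ?_, ?_⟩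
  · rw [h1, Matrix.charpoly, Matrix.det_fin_two]
    simp [Matrix.charmatrix_apply, Matrix.one_fin_two]
  · rw [h2, Matrix.charpoly, Matrix.det_fin_two]
    simp [Matrix.charmatrix_apply, Matrix.one_fin_two]
  · rw [h3, Matrix.charpoly, Matrix.det_fin_two]
    simp [Matrix.charmatrix_apply, Matrix.one_fin_two]
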